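/- arXiv:2010.06915 — 4 statements merged into one kernel-verified Lean document; each statement's English description precedes it below -/
import Mathlib

section
/- Let $\beta \in (0,1]$. There exists a constant $C_\beta > 0$ such that for any increasing function $\kappa : [0,\infty) \to [1,\infty)$ with $r \mapsto \kappa(r)/\log(4+r)$ decreasing, for all $\lambda > 0$ and all $\xi \in \mathbb{R}$, one has $\min\{\lambda|\xi|, 1\}^\beta \le C_\beta\, \kappa(|\xi|)/\kappa(1/\lambda)$. -/
open Set

/-- `min (λ|ξ|) 1 ^ β ≲ κ(|ξ|)/κ(1/λ)` for admissible weights. -/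
theorem stmt_1 (β : ℝ) (hβ : β ∈ Set.Ioc (0:ℝ) 1) :
    ∃ C > 0, ∀ κ : ℝ → ℝ,
      (∀ r, 0 ≤ r → 1 ≤ κ r) →
      MonotoneOn κ (Ici 0) →
      AntitoneOn (fun r => κ r / Real.log (4 + r)) (Ici 0) →
      ∀ lam ξ : ℝ, 0 < lam →
        (min (lam * |ξ|) 1) ^ β ≤ C * (κ |ξ| / κ (1 / lam)) := by
  obtain ⟨hβ0, hβ1⟩ := hβ
  have hlog4 : (0:ℝ) < Real.log 4 := Real.log_pos (by norm_num)
  refine ⟨1 + 1 / (β * Real.log 4), by positivity, ?_⟩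
  intro κ h1 hmono hanti lam ξ hlam
  have hξ : 0 ≤ |ξ| := abs_nonneg ξ
  have hκξ : 1 ≤ κ |ξ| := h1 _ hξ
  have hs : 0 < 1 / lam := by positivity
  have hκs : 1 ≤ κ (1 / lam) := h1 _ hs.le
  have hC1 : (1:ℝ) ≤ 1 + 1 / (β * Real.log 4) := by
    have : 0 ≤ 1 / (β * Real.log 4) := by positivity
    linarith
  by_cases hc : 1 ≤ lam * |ξ|
  · -- min = 1, use monotonicity
    have hle : 1 / lam ≤ |ξ| := by
      rw [div_le_iff₀ hlam]; linarith [mul_comm lam |ξ|]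
    have hmle : κ (1 / lam) ≤ κ |ξ| := hmono (mem_Ici.2 hs.le) (mem_Ici.2 hξ) hle
    rw [min_eq_right hc, Real.one_rpow]
    have hratio : 1 ≤ κ |ξ| / κ (1 / lam) := by
      rw [le_div_iff₀ (by linarith)]; linarith
    nlinarith
  · push_neg at hc
    set t := lam * |ξ| with ht
    have ht0 : 0 ≤ t := by positivity
    rw [min_eq_left hc.le]
    rcases eq_or_lt_of_le ht0 with h0 | h0
    · rw [← h0, Real.zero_rpow hβ0.ne']
      positivity
    · -- 0 < t < 1
      have hξpos : 0 < |ξ| := by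
        rcases hξ.lt_or_eq with h | h
        · exact h
        · exfalso; rw [ht, ← h, mul_zero] at h0; exact lt_irrefl _ h0
      have hlt : |ξ| ≤ 1 / lam := by
        rw [le_div_iff₀ hlam]; linarith [mul_comm |ξ| lam]
      set A := Real.log (4 + |ξ|) with hA
      set B := Real.log (4 + 1 / lam) with hB
      have hA4 : Real.log 4 ≤ A := Real.log_le_log (by norm_num) (by linarith)
      have hApos : 0 < A := lt_of_lt_of_le hlog4 hA4
      have hBpos : 0 < B := lt_of_lt_of_le hlog4
        (Real.log_le_log (by norm_num) (by linarith))
      -- antitone gives κ(1/λ)/B ≤ κ(|ξ|)/A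
      have hanti' : κ (1 / lam) / B ≤ κ |ξ| / A :=
        hanti (mem_Ici.2 hξ) (mem_Ici.2 hs.le) hlt
      -- key: B ≤ A - log t
      have hBA : B ≤ A - Real.log t := by
        have h4 : 4 + 1 / lam ≤ (4 + |ξ|) / t := by
          rw [le_div_iff₀ h0, ht]
          have : 1 / lam * (lam * |ξ|) = |ξ| := by field_simp
          nlinarith
        calc B ≤ Real.log ((4 + |ξ|) / t) := Real.log_le_log (by linarith) h4
          _ = A - Real.log t := Real.log_div (by linarith) h0.ne'
      -- t^β * (-log t) ≤ 1/β
      set u := t ^ β with hu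
      have hu0 : 0 < u := Real.rpow_pos_of_pos h0 β
      have hu1 : u ≤ 1 := Real.rpow_le_one ht0 hc.le hβ0.le
      have hlogu : Real.log u = β * Real.log t := Real.log_rpow h0 β
      have hkey : -(β * Real.log t) ≤ u⁻¹ := by
        have := Real.log_le_sub_one_of_pos (inv_pos.2 hu0)
        rw [Real.log_inv, hlogu] at this
        linarith [inv_pos.2 hu0]
      have hmain : u * (-Real.log t) ≤ 1 / β := by
        have h2 : u * (-(β * Real.log t)) ≤ u * u⁻¹ :=
          mul_le_mul_of_nonneg_left hkey hu0.le
        rw [mul_inv_cancel₀ hu0.ne'] at h2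
        rw [le_div_iff₀ hβ0]
        nlinarith
      -- u * B ≤ C * A
      have huB : u * B ≤ (1 + 1 / (β * Real.log 4)) * A := by
        have h3 : u * B ≤ u * A + u * (-Real.log t) := by nlinarith
        have h4 : u * A ≤ A := by nlinarith
        have h5 : 1 / β ≤ 1 / (β * Real.log 4) * A :=
          calc 1 / β = 1 / (β * Real.log 4) * Real.log 4 := by field_simp
            _ ≤ 1 / (β * Real.log 4) * A := by
              apply mul_le_mul_of_nonneg_left hA4; positivity
        rw [add_mul, one_mul]
        linarith
      -- conclude
      have hκspos : 0 < κ (1 / lam) := by linarith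
      have hratio : A / B ≤ κ |ξ| / κ (1 / lam) := by
        rw [div_le_div_iff₀ hBpos hκspos]
        rw [div_le_div_iff₀ hBpos hApos] at hanti'
        linarith
      calc u ≤ (1 + 1 / (β * Real.log 4)) * (A / B) := by
              rw [← mul_div_assoc, le_div_iff₀ hBpos]; exact huB
        _ ≤ (1 + 1 / (β * Real.log 4)) * (κ |ξ| / κ (1 / lam)) := by
              apply mul_le_mul_of_nonneg_left hratio; positivity
end

section
/- There exists a constant $C > 0$ such that for any real numbers $x_1, x_2, x_3$, setting $\Sigma(x_1,x_2,x_3) = \frac{2x_1^2}{1+x_1^2} - \frac{x_2^2}{1+x_2^2} - \frac{x_3^2}{1+x_3^2}$ and $\langle x \rangle = \sqrt{1+x^2}$, one has $\left|\Sigma(x_1,x_2,x_3) - \frac{2x_1}{\langle x_1 \rangle^4}(2x_1 - x_2 - x_3)\right| \le \frac{C}{\langle x_1 \rangle^2}\big(|x_1-x_2|^2 + |x_1-x_3|^2 + |x_1-x_2|^3 + |x_1-x_3|^3\big)$. -/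
lemma key_stmt3 (a b : ℝ) :
    |a ^ 2 / (1 + a ^ 2) - b ^ 2 / (1 + b ^ 2) - 2 * a / (1 + a ^ 2) ^ 2 * (a - b)|
      ≤ 3 / (1 + a ^ 2) * (|a - b| ^ 2 + |a - b| ^ 3) := by
  have hD : (0:ℝ) < 1 + a ^ 2 := by positivity
  have hE : (0:ℝ) < 1 + b ^ 2 := by positivity
  have heq : a ^ 2 / (1 + a ^ 2) - b ^ 2 / (1 + b ^ 2) - 2 * a / (1 + a ^ 2) ^ 2 * (a - b)
      = (a - b) ^ 2 * (a ^ 2 + 2 * a * b - 1) / ((1 + a ^ 2) ^ 2 * (1 + b ^ 2)) := by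
    field_simp
    ring
  rw [heq, abs_div, abs_of_pos (show (0:ℝ) < (1 + a ^ 2) ^ 2 * (1 + b ^ 2) by positivity),
    div_le_iff₀ (show (0:ℝ) < (1 + a ^ 2) ^ 2 * (1 + b ^ 2) by positivity)]
  have hr : 3 / (1 + a ^ 2) * (|a - b| ^ 2 + |a - b| ^ 3) * ((1 + a ^ 2) ^ 2 * (1 + b ^ 2))
      = 3 * (|a - b| ^ 2 + |a - b| ^ 3) * ((1 + a ^ 2) * (1 + b ^ 2)) := by
    field_simp
  rw [hr, abs_mul, abs_pow, sq_abs]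
  have hc : |a ^ 2 + 2 * a * b - 1| ≤ (1 + a ^ 2) * (3 + |a - b|) := by
    rw [abs_le]
    constructor <;>
      nlinarith [abs_nonneg (a - b), le_abs_self (a * (a - b)), neg_abs_le (a * (a - b)),
        abs_mul a (a - b), abs_nonneg a, sq_nonneg (|a| - 1), sq_abs a,
        mul_le_mul_of_nonneg_right (show 2 * |a| ≤ 1 + a ^ 2 by nlinarith [sq_nonneg (|a| - 1), sq_abs a]) (abs_nonneg (a - b))]
  have hk3 : (a - b) ^ 2 * |a - b| = |a - b| ^ 3 := by
    rw [← sq_abs]; ring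
  nlinarith [mul_le_mul_of_nonneg_left hc (sq_nonneg (a - b)), sq_nonneg (a - b),
    abs_nonneg (a - b), sq_nonneg b, sq_abs (a - b), hk3,
    mul_nonneg (mul_nonneg (pow_nonneg (abs_nonneg (a - b)) 3) hD.le) (sq_nonneg b),
    mul_nonneg (mul_nonneg (sq_nonneg (a - b)) hD.le) (sq_nonneg b),
    mul_nonneg (pow_nonneg (abs_nonneg (a - b)) 3) hD.le]

/-- the null-structure algebraic inequality (Lemma `Z10` of the paper). -/
theorem stmt_3 :
    ∃ C > 0, ∀ x₁ x₂ x₃ : ℝ,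
      |(2 * x₁ ^ 2 / (1 + x₁ ^ 2) - x₂ ^ 2 / (1 + x₂ ^ 2) - x₃ ^ 2 / (1 + x₃ ^ 2))
          - 2 * x₁ / (Real.sqrt (1 + x₁ ^ 2)) ^ 4 * (2 * x₁ - x₂ - x₃)|
        ≤ C / (Real.sqrt (1 + x₁ ^ 2)) ^ 2 *
            (|x₁ - x₂| ^ 2 + |x₁ - x₃| ^ 2 + |x₁ - x₂| ^ 3 + |x₁ - x₃| ^ 3) := by
  refine ⟨3, by norm_num, fun x₁ x₂ x₃ => ?_⟩
  have hs2 : (Real.sqrt (1 + x₁ ^ 2)) ^ 2 = 1 + x₁ ^ 2 := Real.sq_sqrt (by positivity)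
  have hs4 : (Real.sqrt (1 + x₁ ^ 2)) ^ 4 = (1 + x₁ ^ 2) ^ 2 := by
    rw [show (4:ℕ) = 2 * 2 by norm_num, pow_mul, hs2]
  rw [hs2, hs4]
  have hsplit : (2 * x₁ ^ 2 / (1 + x₁ ^ 2) - x₂ ^ 2 / (1 + x₂ ^ 2) - x₃ ^ 2 / (1 + x₃ ^ 2))
        - 2 * x₁ / (1 + x₁ ^ 2) ^ 2 * (2 * x₁ - x₂ - x₃)
      = (x₁ ^ 2 / (1 + x₁ ^ 2) - x₂ ^ 2 / (1 + x₂ ^ 2) - 2 * x₁ / (1 + x₁ ^ 2) ^ 2 * (x₁ - x₂))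
        + (x₁ ^ 2 / (1 + x₁ ^ 2) - x₃ ^ 2 / (1 + x₃ ^ 2) - 2 * x₁ / (1 + x₁ ^ 2) ^ 2 * (x₁ - x₃)) := by
    ring
  rw [hsplit]
  calc |_| ≤ _ := abs_add_le _ _
    _ ≤ 3 / (1 + x₁ ^ 2) * (|x₁ - x₂| ^ 2 + |x₁ - x₂| ^ 3)
        + 3 / (1 + x₁ ^ 2) * (|x₁ - x₃| ^ 2 + |x₁ - x₃| ^ 3) :=
      add_le_add (key_stmt3 x₁ x₂) (key_stmt3 x₁ x₃)
    _ = 3 / (1 + x₁ ^ 2) * (|x₁ - x₂| ^ 2 + |x₁ - x₃| ^ 2 + |x₁ - x₂| ^ 3 + |x₁ - x₃| ^ 3) := by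
      ring
end

section
/- Let $r \ge 1$ and $s < r - 1$ be real numbers. For any nonnegative measurable function $f$ on $(0,\infty)$, one has the Hardy inequality $\int_0^\infty \left(\frac{1}{x}\int_0^x f(\tau)\,d\tau\right)^r x^s\, dx \le \left(\frac{r}{r-s-1}\right)^r \int_0^\infty f(x)^r x^s\, dx$. -/
/-!
Hölder's inequality with the weight `t ^ (α (r - 1) / r)`, `α = (1 + s) / r`, gives
`(∫₀ˣ f) ^ r ≤ (x ^ (1 - α) / (1 - α)) ^ (r - 1) ∫₀ˣ f ^ r t ^ (α (r - 1))`.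
Multiplying by `x ^ (s - r)`, integrating over `x` and exchanging the order of integration,
the inner integral `∫ₜ^∞ x ^ (s - α (r - 1) - 1) dx = t ^ (α - 1) / (1 - α)` restores the weight
`t ^ s`, and the constants combine to `(1 - α) ^ (-r) = (r / (r - s - 1)) ^ r`.
-/

open MeasureTheory Set
open scoped ENNReal

lemma lintegral_Ioo_zero_rpow {a x : ℝ} (ha : -1 < a) (hx : 0 < x) :
    ∫⁻ t in Ioo 0 x, ENNReal.ofReal (t ^ a) = ENNReal.ofReal (x ^ (a + 1) / (a + 1)) := by
  have hint : IntegrableOn (fun t : ℝ ↦ t ^ a) (Ioo 0 x) :=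
    (intervalIntegrable_iff_integrableOn_Ioo_of_le hx.le).1
      (intervalIntegral.intervalIntegrable_rpow' ha)
  rw [← ofReal_integral_eq_lintegral_ofReal hint
      (ae_restrict_of_forall_mem measurableSet_Ioo fun t ht ↦ Real.rpow_nonneg ht.1.le a),
    ← integral_Ioc_eq_integral_Ioo, ← intervalIntegral.integral_of_le hx.le,
    integral_rpow (Or.inl ha), Real.zero_rpow (by linarith), sub_zero]

lemma lintegral_Ioi_rpow_of_lt {a t : ℝ} (ha : a < -1) (ht : 0 < t) :
    ∫⁻ x in Ioi t, ENNReal.ofReal (x ^ a) = ENNReal.ofReal (t ^ (a + 1) / -(a + 1)) := by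
  rw [← ofReal_integral_eq_lintegral_ofReal (integrableOn_Ioi_rpow_of_lt ha ht)
      (ae_restrict_of_forall_mem measurableSet_Ioi fun x hx ↦ Real.rpow_nonneg (ht.trans hx).le a),
    integral_Ioi_rpow_of_lt ha ht, div_neg, neg_div]

lemma setLIntegral_lintegral_Ioo_mul_swap {a : ℝ} {g h : ℝ → ℝ≥0∞}
    (hg : Measurable g) (hh : Measurable h) :
    ∫⁻ x in Ioi a, (∫⁻ t in Ioo a x, g t) * h x = ∫⁻ t in Ioi a, g t * ∫⁻ x in Ioi t, h x := by
  let F : ℝ → ℝ → ℝ≥0∞ := fun x t ↦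
    {p : ℝ × ℝ | p.2 < p.1}.indicator (fun p ↦ g p.2 * h p.1) (x, t)
  have hF : Measurable (Function.uncurry F) :=
    ((hg.comp measurable_snd).mul (hh.comp measurable_fst)).indicator
      (measurableSet_lt measurable_snd measurable_fst)
  have F_eq_Iio : ∀ x t, F x t = (Iio x).indicator (fun t ↦ g t * h x) t := by
    simp [F, indicator_apply]
  have F_eq_Ioi : ∀ x t, F x t = (Ioi t).indicator (fun x ↦ g t * h x) x := by
    simp [F, indicator_apply]
  calc ∫⁻ x in Ioi a, (∫⁻ t in Ioo a x, g t) * h x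
      = ∫⁻ x in Ioi a, ∫⁻ t in Ioi a, F x t := by
        refine setLIntegral_congr_fun measurableSet_Ioi fun x _ ↦ ?_
        simp_rw [F_eq_Iio, lintegral_indicator measurableSet_Iio,
          Measure.restrict_restrict measurableSet_Iio, Iio_inter_Ioi, lintegral_mul_const _ hg]
    _ = ∫⁻ t in Ioi a, ∫⁻ x in Ioi a, F x t := lintegral_lintegral_swap hF.aemeasurable
    _ = ∫⁻ t in Ioi a, g t * ∫⁻ x in Ioi t, h x := by
        refine setLIntegral_congr_fun measurableSet_Ioi fun t ht ↦ ?_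
        simp_rw [F_eq_Ioi, lintegral_indicator measurableSet_Ioi,
          Measure.restrict_restrict measurableSet_Ioi, Ioi_inter_Ioi,
          max_eq_left (le_of_lt (mem_Ioi.1 ht)), lintegral_const_mul _ hh]

lemma setLIntegral_lintegral_Ioo_mul_rpow {γ : ℝ} (hγ : γ < -1) {g : ℝ → ℝ≥0∞}
    (hg : Measurable g) :
    ∫⁻ x in Ioi 0, (∫⁻ t in Ioo 0 x, g t) * ENNReal.ofReal (x ^ γ)
      = ENNReal.ofReal (-(γ + 1))⁻¹ * ∫⁻ t in Ioi 0, g t * ENNReal.ofReal (t ^ (γ + 1)) := by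
  rw [setLIntegral_lintegral_Ioo_mul_swap hg (by fun_prop),
    ← lintegral_const_mul' _ _ ENNReal.ofReal_ne_top]
  refine setLIntegral_congr_fun measurableSet_Ioi fun t ht ↦ ?_
  rw [lintegral_Ioi_rpow_of_lt hγ ht, div_eq_mul_inv,
    ENNReal.ofReal_mul (Real.rpow_nonneg ht.le _)]
  ring

lemma rpow_lintegral_Ioo_zero_le {r α x : ℝ} (hr : 1 ≤ r) (hα : α < 1) (hx : 0 < x)
    {f : ℝ → ℝ≥0∞} (hf : Measurable f) :
    (∫⁻ t in Ioo 0 x, f t) ^ r ≤ ENNReal.ofReal ((x ^ (1 - α) / (1 - α)) ^ (r - 1)) *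
      ∫⁻ t in Ioo 0 x, f t ^ r * ENNReal.ofReal (t ^ (α * (r - 1))) := by
  rcases hr.eq_or_lt with rfl | hr1
  · simp
  set q := r.conjExponent
  have hrq : r.HolderConjugate q := .conjExponent hr1
  have hr0 : 0 < r := hrq.pos
  have hq : q = r / (r - 1) := rfl
  have hr1' : r - 1 ≠ 0 := by linarith
  have hαr : α / q * r = α * (r - 1) := by rw [hq]; field_simp
  have hαq : α / q * q = α := div_mul_cancel₀ _ hrq.symm.ne_zero
  have hqr : 1 / q * r = r - 1 := by rw [hq]; field_simp
  have split : ∫⁻ t in Ioo 0 x, f t = ∫⁻ t in Ioo 0 x,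
      (f t * ENNReal.ofReal (t ^ (α / q))) * ENNReal.ofReal (t ^ (-(α / q))) := by
    refine setLIntegral_congr_fun measurableSet_Ioo fun t ht ↦ ?_
    rw [mul_assoc, ← ENNReal.ofReal_mul (Real.rpow_nonneg ht.1.le _), ← Real.rpow_add ht.1,
      add_neg_cancel, Real.rpow_zero, ENNReal.ofReal_one, mul_one]
  have lp_factor : ∫⁻ t in Ioo 0 x, (f t * ENNReal.ofReal (t ^ (α / q))) ^ r
      = ∫⁻ t in Ioo 0 x, f t ^ r * ENNReal.ofReal (t ^ (α * (r - 1))) := by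
    refine setLIntegral_congr_fun measurableSet_Ioo fun t ht ↦ ?_
    rw [ENNReal.mul_rpow_of_nonneg _ _ hr0.le, ENNReal.ofReal_rpow_of_nonneg
      (Real.rpow_nonneg ht.1.le _) hr0.le, ← Real.rpow_mul ht.1.le, hαr]
  have lq_factor : ∫⁻ t in Ioo 0 x, ENNReal.ofReal (t ^ (-(α / q))) ^ q
      = ENNReal.ofReal (x ^ (1 - α) / (1 - α)) := by
    rw [← neg_add_eq_sub, ← lintegral_Ioo_zero_rpow (by linarith) hx]
    refine setLIntegral_congr_fun measurableSet_Ioo fun t ht ↦ ?_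
    rw [ENNReal.ofReal_rpow_of_nonneg (Real.rpow_nonneg ht.1.le _) hrq.symm.nonneg,
      ← Real.rpow_mul ht.1.le, neg_mul, hαq]
  calc (∫⁻ t in Ioo 0 x, f t) ^ r
      ≤ ((∫⁻ t in Ioo 0 x, (f t * ENNReal.ofReal (t ^ (α / q))) ^ r) ^ (1 / r) *
          (∫⁻ t in Ioo 0 x, ENNReal.ofReal (t ^ (-(α / q))) ^ q) ^ (1 / q)) ^ r := by
        rw [split]
        exact ENNReal.rpow_le_rpow (ENNReal.lintegral_mul_le_Lp_mul_Lq _ hrq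
          (by fun_prop) (by fun_prop)) hr0.le
    _ = _ := by
        rw [lp_factor, lq_factor, ENNReal.mul_rpow_of_nonneg _ _ hr0.le, ← ENNReal.rpow_mul,
          ← ENNReal.rpow_mul, one_div_mul_cancel hr0.ne', ENNReal.rpow_one, hqr,
          ENNReal.ofReal_rpow_of_nonneg (div_nonneg (Real.rpow_nonneg hx.le _) (by linarith))
            (by linarith), mul_comm]

lemma rpow_average_mul_rpow_le {r s α x : ℝ} (hr : 1 ≤ r) (hα : α < 1) (hx : 0 < x)
    {f : ℝ → ℝ≥0∞} (hf : Measurable f) :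
    ((∫⁻ t in Ioo 0 x, f t) / ENNReal.ofReal x) ^ r * ENNReal.ofReal (x ^ s)
      ≤ ENNReal.ofReal ((1 - α) ^ (1 - r)) *
        ((∫⁻ t in Ioo 0 x, f t ^ r * ENNReal.ofReal (t ^ (α * (r - 1)))) *
          ENNReal.ofReal (x ^ (s - α * (r - 1) - 1))) := by
  have h1α : 0 < 1 - α := by linarith
  have powers : (x ^ (1 - α) / (1 - α)) ^ (r - 1) * x ^ (s - r)
      = (1 - α) ^ (1 - r) * x ^ (s - α * (r - 1) - 1) := by
    rw [show 1 - r = -(r - 1) by ring, Real.rpow_neg h1α.le,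
      Real.div_rpow (Real.rpow_nonneg hx.le _) h1α.le, ← Real.rpow_mul hx.le,
      div_mul_eq_mul_div, ← Real.rpow_add hx, div_eq_inv_mul]
    ring_nf
  calc ((∫⁻ t in Ioo 0 x, f t) / ENNReal.ofReal x) ^ r * ENNReal.ofReal (x ^ s)
      = (∫⁻ t in Ioo 0 x, f t) ^ r * ENNReal.ofReal (x ^ (s - r)) := by
        rw [ENNReal.div_rpow_of_nonneg _ _ (by linarith), ENNReal.ofReal_rpow_of_pos hx,
          Real.rpow_sub hx, ENNReal.ofReal_div_of_pos (Real.rpow_pos_of_pos hx r), div_eq_mul_inv,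
          div_eq_mul_inv]
        ring
    _ ≤ ENNReal.ofReal ((x ^ (1 - α) / (1 - α)) ^ (r - 1)) *
          (∫⁻ t in Ioo 0 x, f t ^ r * ENNReal.ofReal (t ^ (α * (r - 1)))) *
          ENNReal.ofReal (x ^ (s - r)) := by
        gcongr
        exact rpow_lintegral_Ioo_zero_le hr hα hx hf
    _ = _ := by
        rw [mul_right_comm, ← ENNReal.ofReal_mul (by positivity), powers,
          ENNReal.ofReal_mul (by positivity)]
        ring

/-- Hardy's inequality on `(0,∞)` with power weight, in `[0,∞]`. -/
theorem stmt_7 (r s : ℝ) (hr : 1 ≤ r) (hs : s < r - 1)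
    (f : ℝ → ENNReal) (hf : Measurable f) :
    ∫⁻ x in Set.Ioi (0:ℝ),
        ((∫⁻ τ in Set.Ioo (0:ℝ) x, f τ) / ENNReal.ofReal x) ^ r * ENNReal.ofReal (x ^ s)
      ≤ ENNReal.ofReal ((r / (r - s - 1)) ^ r) *
          ∫⁻ x in Set.Ioi (0:ℝ), (f x) ^ r * ENNReal.ofReal (x ^ s) := by
  have hr0 : 0 < r := by linarith
  obtain ⟨α, hαr⟩ : ∃ α, α * r = 1 + s := ⟨(1 + s) / r, div_mul_cancel₀ _ hr0.ne'⟩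
  have hα : α < 1 := by nlinarith
  have h1α : 0 < 1 - α := by linarith
  have hr_sub : (1 - α) * r = r - s - 1 := by linear_combination -hαr
  have hγ : s - α * (r - 1) - 1 + 1 = -(1 - α) := by linear_combination -hαr
  calc _ ≤ ∫⁻ x in Ioi 0, ENNReal.ofReal ((1 - α) ^ (1 - r)) *
          ((∫⁻ t in Ioo 0 x, f t ^ r * ENNReal.ofReal (t ^ (α * (r - 1)))) *
            ENNReal.ofReal (x ^ (s - α * (r - 1) - 1))) :=
        setLIntegral_mono' measurableSet_Ioi fun x hx ↦ rpow_average_mul_rpow_le hr hα hx hf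
    _ = ENNReal.ofReal ((1 - α) ^ (1 - r)) * ENNReal.ofReal (1 - α)⁻¹ *
          ∫⁻ t in Ioi 0, f t ^ r * ENNReal.ofReal (t ^ (α * (r - 1))) *
            ENNReal.ofReal (t ^ (-(1 - α))) := by
        rw [lintegral_const_mul' _ _ ENNReal.ofReal_ne_top,
          setLIntegral_lintegral_Ioo_mul_rpow (by linarith) (by fun_prop), hγ, neg_neg, mul_assoc]
    _ = _ := by
        rw [← ENNReal.ofReal_mul (by positivity)]
        congr 1
        · congr 1
          rw [show r / (r - s - 1) = (1 - α)⁻¹ by rw [← hr_sub]; field_simp,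
            Real.inv_rpow h1α.le, ← Real.rpow_neg h1α.le, ← Real.rpow_neg_one, ← Real.rpow_add h1α]
          ring_nf
        · refine setLIntegral_congr_fun measurableSet_Ioi fun t ht ↦ ?_
          rw [mul_assoc, ← ENNReal.ofReal_mul (Real.rpow_nonneg (le_of_lt ht) _),
            ← Real.rpow_add ht]
          congr 3
          linear_combination hαr
end

section
/- Let $\lambda > 0$, let $\chi : \mathbb{R} \to [0,1]$ be even, measurable, equal to $1$ on $[-1,1]$ and equal to $0$ outside $[-2,2]$. Define $\theta_\lambda(\alpha) = \operatorname{sign}(\alpha) \int_{|\alpha|}^\infty \chi(s/\lambda)\, s^{-2}\, ds$. Then there is an absolute constant $C > 0$ with $|\hat\theta_\lambda(\xi)| \le C \min\{1, |\xi|\lambda\}$ for all $\xi \in \mathbb{R}$, where $\hat\theta_\lambda(\xi) = \int \theta_\lambda(\alpha) e^{-i\alpha\xi}\, d\alpha$ (interpreted via the odd structure as $-i\int \theta_\lambda(\alpha)\sin(\alpha\xi)\,d\alpha$). -/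
/-!
The integrand is even in `α`, so the integral is `2 ∫₀^∞ Θ(t) sin(tξ) dt` with
`Θ(t) = ∫ₜ^∞ c` and `c(s) = χ(s/λ) / s²`. Fubini over the triangle `0 < t < s` turns this into
`2 ∫₀^∞ c(s) (1 - cos(sξ)) / ξ ds`. Since `0 ≤ c(s) ≤ s⁻²` and `c` vanishes beyond `2λ`, the bound
`1 - cos x ≤ x² / 2` gives `2λ|ξ|`, while splitting at `s = 2 / |ξ|` and using `1 - cos x ≤ 2`
beyond it gives `4`.
-/

open MeasureTheory Set Real

lemma integral_sign_mul_comp_abs_mul_sin (Θ : ℝ → ℝ) (ξ : ℝ) :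
    ∫ α, (Real.sign α * Θ |α|) * sin (α * ξ) = 2 * ∫ t in Ioi 0, Θ t * sin (t * ξ) := by
  have h_even : ∀ α : ℝ,
      (Real.sign α * Θ |α|) * sin (α * ξ) = Θ |α| * sin (|α| * ξ) := by
    intro α
    rcases lt_trichotomy α 0 with hα | rfl | hα
    · rw [Real.sign_of_neg hα, abs_of_neg hα, neg_mul α, sin_neg]; ring
    · simp
    · rw [Real.sign_of_pos hα, abs_of_pos hα]; ring
  simp_rw [h_even]
  exact integral_comp_abs (f := fun t => Θ t * sin (t * ξ))

lemma abs_one_sub_cos_mul_div_le_sq (s ξ : ℝ) :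
    |(1 - cos (s * ξ)) / ξ| ≤ s ^ 2 * |ξ| / 2 := by
  rcases eq_or_ne ξ 0 with rfl | hξ
  · simp
  have hξ' : 0 < |ξ| := abs_pos.mpr hξ
  rw [abs_div, abs_of_nonneg (sub_nonneg.mpr (cos_le_one _)), div_le_iff₀ hξ']
  nlinarith [one_sub_sq_div_two_le_cos (x := s * ξ), sq_abs ξ]

lemma abs_one_sub_cos_mul_div_le (s ξ : ℝ) : |(1 - cos (s * ξ)) / ξ| ≤ 2 / |ξ| := by
  rw [abs_div, abs_of_nonneg (sub_nonneg.mpr (cos_le_one _))]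
  gcongr
  linarith [neg_one_le_cos (s * ξ)]

lemma setIntegral_Ioo_sin_mul (s ξ : ℝ) (hs : 0 ≤ s) :
    ∫ t in Ioo 0 s, sin (t * ξ) = (1 - cos (s * ξ)) / ξ := by
  rcases eq_or_ne ξ 0 with rfl | hξ
  · simp
  rw [← integral_Ioc_eq_integral_Ioo, ← intervalIntegral.integral_of_le hs,
    intervalIntegral.integral_comp_mul_right sin hξ, integral_sin]
  simp [div_eq_inv_mul]

section

variable {c : ℝ → ℝ}

lemma integrableOn_sq_mul_of_abs_le {L : ℝ} (hm : Measurable c)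
    (hc : ∀ s, 0 < s → |c s| ≤ 1 / s ^ 2) (hsupp : ∀ s, L < s → c s = 0) :
    IntegrableOn (fun s => s ^ 2 * c s) (Ioi 0) := by
  have h_bdd : ∀ s ∈ Ioc 0 L, ‖s ^ 2 * c s‖ ≤ 1 := fun s hs => by
    rw [norm_mul, Real.norm_eq_abs, Real.norm_eq_abs, abs_of_nonneg (sq_nonneg s)]
    calc s ^ 2 * |c s| ≤ s ^ 2 * (1 / s ^ 2) := by gcongr; exact hc s hs.1
      _ = 1 := by field_simp [hs.1.ne']
  have h_Ioc : IntegrableOn (fun s => s ^ 2 * c s) (Ioc 0 L) :=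
    IntegrableOn.of_bound measure_Ioc_lt_top (by fun_prop) 1
      ((ae_restrict_iff' measurableSet_Ioc).mpr (Filter.Eventually.of_forall h_bdd))
  exact h_Ioc.of_forall_sdiff_eq_zero measurableSet_Ioi
    fun s hs => by rw [hsupp s (not_le.mp fun h => hs.2 ⟨hs.1, h⟩), mul_zero]

noncomputable def triangleSinKernel (c : ℝ → ℝ) (ξ : ℝ) : ℝ × ℝ → ℝ :=
  {p : ℝ × ℝ | 0 < p.2 ∧ p.2 < p.1}.indicator fun p => c p.1 * sin (p.2 * ξ)

section triangleSinKernel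

variable (ξ : ℝ)

lemma measurable_triangleSinKernel (hm : Measurable c) : Measurable (triangleSinKernel c ξ) :=
  ((hm.comp measurable_fst).mul (measurable_sin.comp (measurable_snd.mul_const ξ))).indicator
    ((measurableSet_lt measurable_const measurable_snd).inter
      (measurableSet_lt measurable_snd measurable_fst))

lemma triangleSinKernel_apply (s t : ℝ) :
    triangleSinKernel c ξ (s, t) = (Ioo 0 s).indicator (fun t => c s * sin (t * ξ)) t := by
  simp [triangleSinKernel, indicator_apply]

lemma integral_triangleSinKernel_left (s : ℝ) :
    ∫ t, triangleSinKernel c ξ (s, t)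
      = (Ioi 0).indicator (fun s => c s * ((1 - cos (s * ξ)) / ξ)) s := by
  simp_rw [triangleSinKernel_apply, integral_indicator measurableSet_Ioo, integral_const_mul]
  rcases le_or_gt s 0 with hs | hs
  · simp [Ioo_eq_empty (not_lt.mpr hs), notMem_Ioi.mpr hs]
  · rw [indicator_of_mem (mem_Ioi.mpr hs), setIntegral_Ioo_sin_mul s ξ hs.le]

lemma integral_triangleSinKernel_right (t : ℝ) :
    ∫ s, triangleSinKernel c ξ (s, t)
      = (Ioi 0).indicator (fun t => (∫ s in Ioi t, c s) * sin (t * ξ)) t := by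
  rcases le_or_gt t 0 with ht | ht
  · have h_zero : ∀ s, triangleSinKernel c ξ (s, t) = 0 := fun s =>
      indicator_of_notMem (fun h => not_lt.mpr ht h.1) _
    simp [h_zero, notMem_Ioi.mpr ht]
  · have h_slice : ∀ s, triangleSinKernel c ξ (s, t)
        = (Ioi t).indicator (fun s => c s * sin (t * ξ)) s := by
      intro s; simp [triangleSinKernel, indicator_apply, ht]
    simp_rw [h_slice, integral_indicator measurableSet_Ioi, integral_mul_const]
    rw [indicator_of_mem (mem_Ioi.mpr ht)]

-- `|sin (t ξ)| ≤ s |ξ|` on the slice `0 < t < s`: the vanishing of `sin` at `0`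
-- compensates the `s⁻²` singularity of `c`.
lemma integral_norm_triangleSinKernel_le (s : ℝ) :
    ∫ t, ‖triangleSinKernel c ξ (s, t)‖
      ≤ (Ioi 0).indicator (fun s => |ξ| * ‖s ^ 2 * c s‖) s := by
  simp_rw [triangleSinKernel_apply, norm_indicator_eq_indicator_norm,
    integral_indicator measurableSet_Ioo]
  rcases le_or_gt s 0 with hs | hs
  · simp [Ioo_eq_empty (not_lt.mpr hs), notMem_Ioi.mpr hs]
  rw [indicator_of_mem (mem_Ioi.mpr hs)]
  have h_pt : ∀ t ∈ Ioo 0 s, ‖‖c s * sin (t * ξ)‖‖ ≤ |c s| * (s * |ξ|) := by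
    intro t ht
    rw [norm_norm, norm_mul, Real.norm_eq_abs, Real.norm_eq_abs]
    gcongr
    calc |sin (t * ξ)| ≤ |t * ξ| := abs_sin_le_abs
      _ = t * |ξ| := by rw [abs_mul, abs_of_pos ht.1]
      _ ≤ s * |ξ| := by gcongr; exact ht.2.le
  calc ∫ t in Ioo 0 s, ‖c s * sin (t * ξ)‖
      ≤ |c s| * (s * |ξ|) * volume.real (Ioo 0 s) := (Real.le_norm_self _).trans
        (norm_setIntegral_le_of_norm_le_const measure_Ioo_lt_top h_pt)
    _ = |ξ| * ‖s ^ 2 * c s‖ := by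
        rw [Real.volume_real_Ioo_of_le hs.le, norm_mul, Real.norm_eq_abs, Real.norm_eq_abs,
          abs_of_nonneg (sq_nonneg s)]
        ring

lemma integrable_triangleSinKernel (hm : Measurable c)
    (hint : IntegrableOn (fun s => s ^ 2 * c s) (Ioi 0)) :
    Integrable (triangleSinKernel c ξ) (volume.prod volume) := by
  have hK := measurable_triangleSinKernel ξ hm
  refine (integrable_prod_iff hK.aestronglyMeasurable).mpr ⟨?_, ?_⟩
  · refine Filter.Eventually.of_forall fun s => ?_
    simp_rw [triangleSinKernel_apply]
    refine IntegrableOn.integrable_indicator ?_ measurableSet_Ioo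
    exact (Continuous.integrableOn_Icc (by fun_prop)).mono_set Ioo_subset_Icc_self
  · refine (IntegrableOn.integrable_indicator (hint.norm.const_mul |ξ|) measurableSet_Ioi).mono'
      hK.norm.aestronglyMeasurable.integral_prod_right' (Filter.Eventually.of_forall fun s => ?_)
    rw [Real.norm_of_nonneg (integral_nonneg fun _ => norm_nonneg _)]
    exact integral_norm_triangleSinKernel_le ξ s

lemma setIntegral_Ioi_integral_Ioi_mul_sin (hm : Measurable c)
    (hint : IntegrableOn (fun s => s ^ 2 * c s) (Ioi 0)) :
    ∫ t in Ioi 0, (∫ s in Ioi t, c s) * sin (t * ξ)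
      = ∫ s in Ioi 0, c s * ((1 - cos (s * ξ)) / ξ) := by
  calc ∫ t in Ioi 0, (∫ s in Ioi t, c s) * sin (t * ξ)
      = ∫ t, ∫ s, triangleSinKernel c ξ (s, t) := by
        simp_rw [integral_triangleSinKernel_right, integral_indicator measurableSet_Ioi]
    _ = ∫ s, ∫ t, triangleSinKernel c ξ (s, t) :=
        (integral_integral_swap (f := fun s t => triangleSinKernel c ξ (s, t))
          (integrable_triangleSinKernel ξ hm hint)).symm
    _ = ∫ s in Ioi 0, c s * ((1 - cos (s * ξ)) / ξ) := by
        simp_rw [integral_triangleSinKernel_left, integral_indicator measurableSet_Ioi]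

end triangleSinKernel

lemma abs_setIntegral_mul_one_sub_cos_div_le_of_support {L : ℝ} (hL : 0 ≤ L)
    (hc : ∀ s, 0 < s → |c s| ≤ 1 / s ^ 2) (hsupp : ∀ s, L < s → c s = 0) (ξ : ℝ) :
    |∫ s in Ioi 0, c s * ((1 - cos (s * ξ)) / ξ)| ≤ L * |ξ| / 2 := by
  have h_restrict : ∫ s in Ioi 0, c s * ((1 - cos (s * ξ)) / ξ)
      = ∫ s in Ioc 0 L, c s * ((1 - cos (s * ξ)) / ξ) :=
    setIntegral_eq_of_subset_of_forall_sdiff_eq_zero measurableSet_Ioi Ioc_subset_Ioi_self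
      fun s hs => by rw [hsupp s (not_le.mp fun h => hs.2 ⟨hs.1, h⟩), zero_mul]
  have h_pt : ∀ s ∈ Ioc 0 L, ‖c s * ((1 - cos (s * ξ)) / ξ)‖ ≤ |ξ| / 2 := fun s hs =>
    calc ‖c s * ((1 - cos (s * ξ)) / ξ)‖ ≤ 1 / s ^ 2 * (s ^ 2 * |ξ| / 2) := by
          rw [Real.norm_eq_abs, abs_mul]
          exact mul_le_mul (hc s hs.1) (abs_one_sub_cos_mul_div_le_sq s ξ) (abs_nonneg _)
            (by positivity)
      _ = |ξ| / 2 := by field_simp [hs.1.ne']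
  rw [h_restrict, ← Real.norm_eq_abs]
  calc _ ≤ |ξ| / 2 * volume.real (Ioc 0 L) := norm_setIntegral_le_of_norm_le_const
        measure_Ioc_lt_top h_pt
    _ = L * |ξ| / 2 := by rw [Real.volume_real_Ioc_of_le hL]; ring

lemma abs_setIntegral_mul_one_sub_cos_div_le_two (hc : ∀ s, 0 < s → |c s| ≤ 1 / s ^ 2)
    (ξ : ℝ) :
    |∫ s in Ioi 0, c s * ((1 - cos (s * ξ)) / ξ)| ≤ 2 := by
  rcases eq_or_ne ξ 0 with rfl | hξ
  · simp
  have hξ' : 0 < |ξ| := abs_pos.mpr hξ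
  -- split at `a = 2 / |ξ|`, where the two pointwise bounds agree
  set a := 2 / |ξ| with ha
  have ha0 : 0 < a := by positivity
  set g : ℝ → ℝ := fun s => (Ioc 0 a).indicator (fun _ => |ξ| / 2) s
    + (Ioi a).indicator (fun s => 2 / |ξ| * s ^ (-2 : ℝ)) s with hg
  have hg1 : IntegrableOn (fun _ : ℝ => |ξ| / 2) (Ioc 0 a) :=
    integrableOn_const measure_Ioc_lt_top.ne
  have hg2 : IntegrableOn (fun s : ℝ => 2 / |ξ| * s ^ (-2 : ℝ)) (Ioi a) :=
    (integrableOn_Ioi_rpow_of_lt (by norm_num) ha0).const_mul _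
  have hg_int : Integrable g (volume.restrict (Ioi 0)) :=
    ((hg1.integrable_indicator measurableSet_Ioc).add
      (hg2.integrable_indicator measurableSet_Ioi)).restrict
  have hg_val : ∫ s in Ioi 0, g s = 2 := by
    rw [hg, integral_add (hg1.integrable_indicator measurableSet_Ioc).restrict
      (hg2.integrable_indicator measurableSet_Ioi).restrict]
    simp only [integral_indicator measurableSet_Ioc, integral_indicator measurableSet_Ioi,
      Measure.restrict_restrict measurableSet_Ioc, Measure.restrict_restrict measurableSet_Ioi,
      inter_eq_left.mpr Ioc_subset_Ioi_self, inter_eq_left.mpr (Ioi_subset_Ioi ha0.le)]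
    rw [setIntegral_const, Real.volume_real_Ioc_of_le ha0.le, integral_const_mul,
      integral_Ioi_rpow_of_lt (by norm_num) ha0, ha]
    norm_num [Real.rpow_neg_one]
    field_simp
    norm_num
  have h_pt : ∀ s ∈ Ioi (0 : ℝ), ‖c s * ((1 - cos (s * ξ)) / ξ)‖ ≤ g s := by
    intro s (hs : 0 < s)
    rw [Real.norm_eq_abs, abs_mul]
    show _ ≤ (Ioc 0 a).indicator _ s + (Ioi a).indicator _ s
    rcases le_or_gt s a with hsa | hsa
    · rw [indicator_of_mem (mem_Ioc.mpr ⟨hs, hsa⟩), indicator_of_notMem (notMem_Ioi.mpr hsa),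
        add_zero]
      calc |c s| * |(1 - cos (s * ξ)) / ξ| ≤ 1 / s ^ 2 * (s ^ 2 * |ξ| / 2) :=
            mul_le_mul (hc s hs) (abs_one_sub_cos_mul_div_le_sq s ξ) (abs_nonneg _)
              (by positivity)
        _ = |ξ| / 2 := by field_simp
    · rw [indicator_of_notMem fun h : s ∈ Ioc 0 a => (not_le.mpr hsa) h.2,
        indicator_of_mem (mem_Ioi.mpr hsa), zero_add,
        Real.rpow_neg hs.le, Real.rpow_two]
      calc |c s| * |(1 - cos (s * ξ)) / ξ| ≤ 1 / s ^ 2 * (2 / |ξ|) :=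
            mul_le_mul (hc s hs) (abs_one_sub_cos_mul_div_le s ξ) (abs_nonneg _)
              (by positivity)
        _ = 2 / |ξ| * (s ^ 2)⁻¹ := by ring
  rw [← Real.norm_eq_abs, ← hg_val]
  exact norm_integral_le_of_norm_le hg_int ((ae_restrict_iff' measurableSet_Ioi).mpr
    (Filter.Eventually.of_forall h_pt))

end

/-- bound `|θ̂_λ(ξ)| ≲ min{1, |ξ|λ}` for the truncated Hilbert kernel. -/
theorem stmt_14 :
    ∃ C > 0, ∀ lam : ℝ, 0 < lam → ∀ χ : ℝ → ℝ,
      Measurable χ → (∀ x, χ x ∈ Set.Icc (0:ℝ) 1) → (∀ x, χ (-x) = χ x) →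
      (∀ x ∈ Set.Icc (-1:ℝ) 1, χ x = 1) → (∀ x : ℝ, 2 < |x| → χ x = 0) →
      ∀ ξ : ℝ,
        |∫ α : ℝ, (Real.sign α * ∫ s in Set.Ioi |α|, χ (s / lam) / s ^ 2) * Real.sin (α * ξ)|
          ≤ C * min 1 (|ξ| * lam) := by
  refine ⟨4, by norm_num, fun lam hlam χ hχ_meas hχ_mem _ _ hχ_supp ξ => ?_⟩
  set c : ℝ → ℝ := fun s => χ (s / lam) / s ^ 2
  have hc_meas : Measurable c := by fun_prop
  have hc_le : ∀ s, 0 < s → |c s| ≤ 1 / s ^ 2 := fun s hs => by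
    rw [abs_of_nonneg (div_nonneg (hχ_mem _).1 (sq_nonneg s))]
    gcongr
    exact (hχ_mem _).2
  have hc_supp : ∀ s, 2 * lam < s → c s = 0 := fun s hs => by
    have : 2 < |s / lam| := by
      rw [abs_of_pos (div_pos (by linarith) hlam), lt_div_iff₀ hlam]; exact hs
    simp only [c, hχ_supp _ this, zero_div]
  rw [integral_sign_mul_comp_abs_mul_sin (fun t => ∫ s in Ioi t, c s),
    setIntegral_Ioi_integral_Ioi_mul_sin ξ hc_meas
      (integrableOn_sq_mul_of_abs_le hc_meas hc_le hc_supp),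
    abs_mul, abs_two]
  have h_small := abs_setIntegral_mul_one_sub_cos_div_le_of_support (by positivity) hc_le hc_supp ξ
  have h_large := abs_setIntegral_mul_one_sub_cos_div_le_two hc_le ξ
  rcases le_total 1 (|ξ| * lam) with h | h
  · rw [min_eq_left h]; linarith
  · rw [min_eq_right h]; nlinarith [abs_nonneg ξ]
end
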